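/- arXiv:1908.07452 — 4 statements merged into one kernel-verified Lean document; each statement's English description precedes it below -/
import Mathlib

section
/- Let V be a finite vertex type and F a finite face type, with each face f assigned an edge set E_f (unordered pairs of distinct vertices) such that every vertex incident to an edge of E_f is incident to exactly two edges of E_f. Assume the two-face condition and the single-shared-edge condition hold. Then every flag (v,f) has degree exactly 4 in the Euler-transformed graph Ĝ. -/
open scoped Classical

noncomputable section

/-- A *flag* of a combinatorial polygonal complex: a pair `(v, f)` of a vertex and a face
such that `v` is incident to some edge of the edge set `E f` of the face `f`. -/
abbrev EulerFlag {V F : Type*} (E : F → Finset (Sym2 V)) : Type _ :=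
  {p : V × F // ∃ e ∈ E p.2, p.1 ∈ e}

/-- The adjacency relation of the Euler-transformed graph on flags:
`(u, f)` and `(v, f)` are related when `{u, v} ∈ E f`, and `(v, f)` and `(v, f')` are related
when `f ≠ f'` and some edge `e ∈ E f ∩ E f'` contains `v`. -/
def eulerRel {V F : Type*} (E : F → Finset (Sym2 V)) (p q : EulerFlag E) : Prop :=
  (p.val.2 = q.val.2 ∧ p.val.1 ≠ q.val.1 ∧ s(p.val.1, q.val.1) ∈ E p.val.2) ∨
    (p.val.1 = q.val.1 ∧ p.val.2 ≠ q.val.2 ∧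
      ∃ e, e ∈ E p.val.2 ∧ e ∈ E q.val.2 ∧ p.val.1 ∈ e)

/-- The Euler-transformed graph `Ĝ` on flags. -/
def eulerGraph {V F : Type*} (E : F → Finset (Sym2 V)) : SimpleGraph (EulerFlag E) :=
  SimpleGraph.fromRel (eulerRel E)

lemma eulerRel_symm {V F : Type*} (E : F → Finset (Sym2 V)) {p q : EulerFlag E}
    (h : eulerRel E p q) : eulerRel E q p := by
  rcases h with ⟨h1, h2, h3⟩ | ⟨h1, h2, h3⟩
  · refine Or.inl ⟨h1.symm, Ne.symm h2, ?_⟩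
    rw [Sym2.eq_swap, ← h1]; exact h3
  · obtain ⟨e, he1, he2, he3⟩ := h3
    exact Or.inr ⟨h1.symm, Ne.symm h2, e, he2, he1, h1 ▸ he3⟩

lemma eulerRel_ne {V F : Type*} (E : F → Finset (Sym2 V)) {p q : EulerFlag E}
    (h : eulerRel E p q) : p ≠ q := by
  rcases h with ⟨_, h2, _⟩ | ⟨_, h2, _⟩ <;>
    · intro hpq; exact h2 (by rw [hpq])

lemma eulerGraph_adj {V F : Type*} (E : F → Finset (Sym2 V)) (p q : EulerFlag E) :
    (eulerGraph E).Adj p q ↔ eulerRel E p q := by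
  rw [eulerGraph, SimpleGraph.fromRel_adj]
  constructor
  · rintro ⟨_, h | h⟩
    · exact h
    · exact eulerRel_symm E h
  · intro h; exact ⟨eulerRel_ne E h, Or.inl h⟩

lemma pair_of_mem_card_two {α : Type*} [DecidableEq α] {s : Finset α} {a : α}
    (h2 : s.card = 2) (ha : a ∈ s) : ∃ b, b ≠ a ∧ s = {a, b} := by
  obtain ⟨x, y, hxy, rfl⟩ := Finset.card_eq_two.mp h2
  rcases Finset.mem_insert.mp ha with rfl | ha'
  · exact ⟨y, hxy.symm, rfl⟩
  · rcases Finset.mem_singleton.mp ha' with rfl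
    exact ⟨x, hxy, Finset.pair_comm x a⟩

/-- Under the two-face and single-shared-edge conditions, every flag has degree exactly 4
in the Euler-transformed graph. -/
theorem euler_transform_degree_four {V F : Type*} [Fintype V] [Fintype F]
    (E : F → Finset (Sym2 V))
    (hnd : ∀ f, ∀ e ∈ E f, ¬ e.IsDiag)
    (hloc : ∀ f v, (∃ e ∈ E f, v ∈ e) → ((E f).filter (fun e => v ∈ e)).card = 2)
    (htwo : ∀ e : Sym2 V, (∃ f, e ∈ E f) →
      (Finset.univ.filter (fun f => e ∈ E f)).card = 2)
    (hshare : ∀ f f' : F, f ≠ f' → ((E f) ∩ (E f')).card ≤ 1) :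
    ∀ p : EulerFlag E, (eulerGraph E).degree p = 4 := by
  rintro p
  obtain ⟨⟨v, f⟩, hp⟩ := p
  -- the two edges through v in f
  obtain ⟨e1, e2, he12, hE⟩ := Finset.card_eq_two.mp (hloc f v hp)
  have he1 : e1 ∈ (E f).filter (fun e => v ∈ e) := by rw [hE]; simp
  have he2 : e2 ∈ (E f).filter (fun e => v ∈ e) := by rw [hE]; simp
  obtain ⟨he1f, hv1⟩ := Finset.mem_filter.mp he1
  obtain ⟨he2f, hv2⟩ := Finset.mem_filter.mp he2
  -- the other endpoints
  set u1 := Sym2.Mem.other hv1 with hu1def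
  set u2 := Sym2.Mem.other hv2 with hu2def
  have hs1 : s(v, u1) = e1 := Sym2.other_spec hv1
  have hs2 : s(v, u2) = e2 := Sym2.other_spec hv2
  have hu1v : u1 ≠ v := by
    intro h; apply hnd f e1 he1f; rw [← hs1, h]; exact Sym2.mk_isDiag_iff.mpr rfl
  have hu2v : u2 ≠ v := by
    intro h; apply hnd f e2 he2f; rw [← hs2, h]; exact Sym2.mk_isDiag_iff.mpr rfl
  have hu12 : u1 ≠ u2 := by
    intro h; apply he12; rw [← hs1, ← hs2, h]
  -- the two other faces
  have hf1mem : f ∈ Finset.univ.filter (fun g => e1 ∈ E g) := by simp [he1f]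
  have hf2mem : f ∈ Finset.univ.filter (fun g => e2 ∈ E g) := by simp [he2f]
  obtain ⟨f1, hf1ne, hF1⟩ := pair_of_mem_card_two (htwo e1 ⟨f, he1f⟩) hf1mem
  obtain ⟨f2, hf2ne, hF2⟩ := pair_of_mem_card_two (htwo e2 ⟨f, he2f⟩) hf2mem
  have he1f1 : e1 ∈ E f1 := by
    have : f1 ∈ Finset.univ.filter (fun g => e1 ∈ E g) := by rw [hF1]; simp
    simpa using this
  have he2f2 : e2 ∈ E f2 := by
    have : f2 ∈ Finset.univ.filter (fun g => e2 ∈ E g) := by rw [hF2]; simp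
    simpa using this
  have hf12 : f1 ≠ f2 := by
    intro h
    have hsub : ({e1, e2} : Finset (Sym2 V)) ⊆ E f ∩ E f1 := by
      intro e he
      rcases Finset.mem_insert.mp he with rfl | he'
      · exact Finset.mem_inter.mpr ⟨he1f, he1f1⟩
      · rcases Finset.mem_singleton.mp he' with rfl
        exact Finset.mem_inter.mpr ⟨he2f, h ▸ he2f2⟩
    have := (Finset.card_le_card hsub).trans (hshare f f1 hf1ne.symm)
    rw [Finset.card_insert_of_notMem (by simpa using he12), Finset.card_singleton] at this
    omega
  -- the four neighbors
  have hmem1 : u1 ∈ e1 := hs1 ▸ Sym2.mem_mk_right v u1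
  have hmem2 : u2 ∈ e2 := hs2 ▸ Sym2.mem_mk_right v u2
  set a1 : EulerFlag E := ⟨(u1, f), ⟨e1, he1f, hmem1⟩⟩ with ha1def
  set a2 : EulerFlag E := ⟨(u2, f), ⟨e2, he2f, hmem2⟩⟩ with ha2def
  set b1 : EulerFlag E := ⟨(v, f1), ⟨e1, he1f1, hv1⟩⟩ with hb1def
  set b2 : EulerFlag E := ⟨(v, f2), ⟨e2, he2f2, hv2⟩⟩ with hb2def
  have hnbr : (eulerGraph E).neighborFinset ⟨(v, f), hp⟩ = {a1, a2, b1, b2} := by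
    ext q
    rw [SimpleGraph.mem_neighborFinset, eulerGraph_adj]
    constructor
    · rintro (⟨h1, h2, h3⟩ | ⟨h1, h2, h3⟩)
      · -- same face, edge s(v, q.1.1) ∈ E f
        have hq : s(v, q.val.1) ∈ (E f).filter (fun e => v ∈ e) :=
          Finset.mem_filter.mpr ⟨h3, Sym2.mem_mk_left _ _⟩
        rw [hE] at hq
        have hqval : q.val = (u1, f) ∨ q.val = (u2, f) := by
          rcases Finset.mem_insert.mp hq with h | h
          · left
            have := h.trans hs1.symm
            rcases Sym2.eq_iff.mp this with ⟨_, h'⟩ | ⟨_, h''⟩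
            · exact Prod.ext h' h1.symm
            · exact absurd h''.symm h2
          · right
            rcases Finset.mem_singleton.mp h with h
            have := h.trans hs2.symm
            rcases Sym2.eq_iff.mp this with ⟨_, h'⟩ | ⟨_, h''⟩
            · exact Prod.ext h' h1.symm
            · exact absurd h''.symm h2
        simp only [Finset.mem_insert, Finset.mem_singleton]
        rcases hqval with h | h
        · exact Or.inl (Subtype.ext h)
        · exact Or.inr (Or.inl (Subtype.ext h))
      · -- same vertex, shared edge
        obtain ⟨e, hef, heq, hve⟩ := h3
        have he : e ∈ (E f).filter (fun e => v ∈ e) := Finset.mem_filter.mpr ⟨hef, hve⟩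
        rw [hE] at he
        have hqf : q.val.2 ∈ Finset.univ.filter (fun g => e ∈ E g) := by simp [heq]
        have hqval : q.val = (v, f1) ∨ q.val = (v, f2) := by
          rcases Finset.mem_insert.mp he with rfl | he'
          · left
            rw [hF1] at hqf
            rcases Finset.mem_insert.mp hqf with h | h
            · exact absurd h.symm h2
            · exact Prod.ext h1.symm (Finset.mem_singleton.mp h)
          · right
            rcases Finset.mem_singleton.mp he' with rfl
            rw [hF2] at hqf
            rcases Finset.mem_insert.mp hqf with h | h
            · exact absurd h.symm h2
            · exact Prod.ext h1.symm (Finset.mem_singleton.mp h)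
        simp only [Finset.mem_insert, Finset.mem_singleton]
        rcases hqval with h | h
        · exact Or.inr (Or.inr (Or.inl (Subtype.ext h)))
        · exact Or.inr (Or.inr (Or.inr (Subtype.ext h)))
    · intro hq
      rcases Finset.mem_insert.mp hq with rfl | hq'
      · exact Or.inl ⟨rfl, hu1v.symm, hs1 ▸ he1f⟩
      rcases Finset.mem_insert.mp hq' with rfl | hq''
      · exact Or.inl ⟨rfl, hu2v.symm, hs2 ▸ he2f⟩
      rcases Finset.mem_insert.mp hq'' with rfl | hq'''
      · exact Or.inr ⟨rfl, hf1ne.symm, e1, he1f, he1f1, hv1⟩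
      rcases Finset.mem_singleton.mp hq''' with rfl
      · exact Or.inr ⟨rfl, hf2ne.symm, e2, he2f, he2f2, hv2⟩
  rw [SimpleGraph.degree, hnbr]
  have hab1 : a1 ≠ b1 := by simp [ha1def, hb1def, Subtype.ext_iff, Prod.ext_iff, hu1v]
  have hab2 : a1 ≠ b2 := by simp [ha1def, hb2def, Subtype.ext_iff, Prod.ext_iff, hu1v]
  have hab3 : a2 ≠ b1 := by simp [ha2def, hb1def, Subtype.ext_iff, Prod.ext_iff, hu2v]
  have hab4 : a2 ≠ b2 := by simp [ha2def, hb2def, Subtype.ext_iff, Prod.ext_iff, hu2v]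
  have ha : a1 ≠ a2 := by simp [ha1def, ha2def, Subtype.ext_iff, Prod.ext_iff, hu12]
  have hb : b1 ≠ b2 := by simp [hb1def, hb2def, Subtype.ext_iff, Prod.ext_iff, hf12]
  rw [Finset.card_insert_of_notMem (by simp [ha, hab1, hab2]),
    Finset.card_insert_of_notMem (by simp [hab3, hab4]),
    Finset.card_insert_of_notMem (by simp [hb]), Finset.card_singleton]
end
end

section
/- Let V be a finite vertex type and F a finite face type, with each face f assigned an edge set E_f such that every vertex incident to an edge of E_f is incident to exactly two edges of E_f, and assume the two-face condition. Then for every vertex v, the number of faces f such that (v,f) is a flag equals the degree of v in the union graph G (the simple graph on V whose edge set is E = ⋃_f E_f). -/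
open scoped Classical

noncomputable section

/-- The union graph `G` on `V` whose edge set is `E = ⋃ f, E f`. -/
def unionGraph {V F : Type*} (E : F → Finset (Sym2 V)) : SimpleGraph V :=
  SimpleGraph.fromEdgeSet {e : Sym2 V | ∃ f, e ∈ E f}

/-- Under the two-face condition, the number of faces `f` such that `(v, f)` is a flag equals
the degree of `v` in the union graph. -/
theorem flag_count_eq_union_degree {V F : Type*} [Fintype V] [Fintype F]
    (E : F → Finset (Sym2 V))
    (hnd : ∀ f, ∀ e ∈ E f, ¬ e.IsDiag)
    (hloc : ∀ f v, (∃ e ∈ E f, v ∈ e) → ((E f).filter (fun e => v ∈ e)).card = 2)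
    (htwo : ∀ e : Sym2 V, (∃ f, e ∈ E f) →
      (Finset.univ.filter (fun f => e ∈ E f)).card = 2) :
    ∀ v : V,
      (Finset.univ.filter (fun f : F => ∃ e ∈ E f, v ∈ e)).card = (unionGraph E).degree v := by
  intro v
  classical
  -- B : edges containing v
  set B : Finset (Sym2 V) :=
    Finset.univ.filter (fun e : Sym2 V => (∃ f, e ∈ E f) ∧ v ∈ e) with hB
  set A : Finset F := Finset.univ.filter (fun f : F => ∃ e ∈ E f, v ∈ e) with hA
  -- degree = B.card
  have hdeg : (unionGraph E).degree v = B.card := by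
    rw [SimpleGraph.degree]
    apply Finset.card_bij (fun u _ => s(v, u))
    · intro u hu
      simp only [Finset.mem_filter, Finset.mem_univ, true_and, hB]
      rw [SimpleGraph.mem_neighborFinset] at hu
      simp only [unionGraph, SimpleGraph.fromEdgeSet_adj, Set.mem_setOf_eq] at hu
      exact ⟨hu.1, Sym2.mem_mk_left v u⟩
    · intro u hu u' hu' h
      rw [SimpleGraph.mem_neighborFinset] at hu hu'
      simp only [unionGraph, SimpleGraph.fromEdgeSet_adj] at hu hu'
      rcases Sym2.eq_iff.mp h with ⟨_, h2⟩ | ⟨h1, h2⟩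
      · exact h2
      · exact absurd h2.symm hu.2
    · intro e he
      simp only [hB, Finset.mem_filter, Finset.mem_univ, true_and] at he
      obtain ⟨⟨f, hf⟩, hv⟩ := he
      induction e with
      | _ a b =>
        have hab : a ≠ b := by
          intro h; exact hnd f _ hf (by simp [h])
        rcases Sym2.mem_iff.mp hv with rfl | rfl
        · refine ⟨b, ?_, rfl⟩
          rw [SimpleGraph.mem_neighborFinset]
          simp only [unionGraph, SimpleGraph.fromEdgeSet_adj, Set.mem_setOf_eq]
          exact ⟨⟨f, hf⟩, hab⟩
        · refine ⟨a, ?_, Sym2.eq_swap⟩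
          rw [SimpleGraph.mem_neighborFinset]
          simp only [unionGraph, SimpleGraph.fromEdgeSet_adj, Set.mem_setOf_eq]
          exact ⟨⟨f, by rwa [Sym2.eq_swap]⟩, fun h => hab h.symm⟩
  -- double count
  have key : ∑ f : F, ((E f).filter (fun e => v ∈ e)).card
      = ∑ e : Sym2 V, if v ∈ e then (Finset.univ.filter (fun f : F => e ∈ E f)).card else 0 := by
    have h1 : ∀ f : F, ((E f).filter (fun e => v ∈ e)).card
        = ∑ e : Sym2 V, if e ∈ E f ∧ v ∈ e then 1 else 0 := by
      intro f
      have : (E f).filter (fun e => v ∈ e)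
          = Finset.univ.filter (fun e : Sym2 V => e ∈ E f ∧ v ∈ e) := by
        ext e; simp
      rw [this, Finset.card_filter]
    simp_rw [h1]
    rw [Finset.sum_comm]
    apply Finset.sum_congr rfl
    intro e _
    by_cases hv : v ∈ e
    · simp only [hv, and_true, if_true, Finset.card_filter]
    · simp [hv]
  have left : ∑ f : F, ((E f).filter (fun e => v ∈ e)).card = 2 * A.card := by
    rw [← Finset.sum_filter_add_sum_filter_not Finset.univ (fun f : F => ∃ e ∈ E f, v ∈ e)]
    rw [Finset.sum_congr rfl (fun f hf => hloc f v (by simpa using hf))]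
    have : ∀ f ∈ Finset.univ.filter (fun f : F => ¬ ∃ e ∈ E f, v ∈ e),
        ((E f).filter (fun e => v ∈ e)).card = 0 := by
      intro f hf
      simp only [Finset.mem_filter, Finset.mem_univ, true_and] at hf
      rw [Finset.card_eq_zero, Finset.filter_eq_empty_iff]
      intro e he hv; exact hf ⟨e, he, hv⟩
    rw [Finset.sum_congr rfl this]
    simp [hA, mul_comm]
  have right : (∑ e : Sym2 V, if v ∈ e then (Finset.univ.filter (fun f : F => e ∈ E f)).card else 0)
      = 2 * B.card := by
    rw [← Finset.sum_filter_add_sum_filter_not Finset.univ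
      (fun e : Sym2 V => (∃ f, e ∈ E f) ∧ v ∈ e)]
    have h1 : ∀ e ∈ Finset.univ.filter (fun e : Sym2 V => (∃ f, e ∈ E f) ∧ v ∈ e),
        (if v ∈ e then (Finset.univ.filter (fun f : F => e ∈ E f)).card else 0) = 2 := by
      intro e he
      simp only [Finset.mem_filter, Finset.mem_univ, true_and] at he
      rw [if_pos he.2]
      exact htwo e he.1
    have h2 : ∀ e ∈ Finset.univ.filter (fun e : Sym2 V => ¬ ((∃ f, e ∈ E f) ∧ v ∈ e)),
        (if v ∈ e then (Finset.univ.filter (fun f : F => e ∈ E f)).card else 0) = 0 := by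
      intro e he
      simp only [Finset.mem_filter, Finset.mem_univ, true_and, not_and] at he
      by_cases hv : v ∈ e
      · rw [if_pos hv, Finset.card_eq_zero, Finset.filter_eq_empty_iff]
        intro f _ hf
        exact (he ⟨f, hf⟩) hv
      · rw [if_neg hv]
    rw [Finset.sum_congr rfl h1, Finset.sum_congr rfl h2]
    simp [hB, mul_comm]
  have : 2 * A.card = 2 * B.card := by rw [← left, key, right]
  omega
end
end

section
/- Let V be a finite vertex type and F a finite face type, with each face f assigned an edge set E_f such that every vertex incident to an edge of E_f is incident to exactly two edges of E_f, and assume the two-face condition and the single-shared-edge condition. Then for every edge e = {u,v} ∈ E with its two faces f and f', the four flags (u,f), (v,f), (v,f'), (u,f') are pairwise distinct, and in the Euler-transformed graph Ĝ the adjacencies (u,f)–(v,f), (v,f)–(v,f'), (v,f')–(u,f'), and (u,f')–(u,f) all hold; i.e., these four flags form a 4-cycle in Ĝ. -/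
open scoped Classical

noncomputable section

/-- Under the two-face and single-shared-edge conditions, every edge `{u,v}` lying in the two
faces `f ≠ f'` gives rise to four pairwise distinct flags `(u,f), (v,f), (v,f'), (u,f')`
forming a 4-cycle in the Euler-transformed graph. -/
theorem euler_transform_edge_four_cycle {V F : Type*} [Fintype V] [Fintype F]
    (E : F → Finset (Sym2 V))
    (hnd : ∀ f, ∀ e ∈ E f, ¬ e.IsDiag)
    (hloc : ∀ f v, (∃ e ∈ E f, v ∈ e) → ((E f).filter (fun e => v ∈ e)).card = 2)
    (htwo : ∀ e : Sym2 V, (∃ f, e ∈ E f) →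
      (Finset.univ.filter (fun f => e ∈ E f)).card = 2)
    (hshare : ∀ f f' : F, f ≠ f' → ((E f) ∩ (E f')).card ≤ 1)
    (u v : V) (f f' : F) (huv : u ≠ v) (hff' : f ≠ f')
    (hef : s(u, v) ∈ E f) (hef' : s(u, v) ∈ E f')
    (a b c d : EulerFlag E)
    (ha : a.val = (u, f)) (hb : b.val = (v, f))
    (hc : c.val = (v, f')) (hd : d.val = (u, f')) :
    (a ≠ b ∧ a ≠ c ∧ a ≠ d ∧ b ≠ c ∧ b ≠ d ∧ c ≠ d) ∧
    (eulerGraph E).Adj a b ∧ (eulerGraph E).Adj b c ∧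
    (eulerGraph E).Adj c d ∧ (eulerGraph E).Adj d a := by
  have hab : a ≠ b := fun h => huv (show u = v by have := congrArg (Prod.fst ∘ Subtype.val) h; simpa [ha, hb] using this)
  have hac : a ≠ c := fun h => hff' (show f = f' by have := congrArg (Prod.snd ∘ Subtype.val) h; simpa [ha, hc] using this)
  have had : a ≠ d := fun h => hff' (show f = f' by have := congrArg (Prod.snd ∘ Subtype.val) h; simpa [ha, hd] using this)
  have hbc : b ≠ c := fun h => hff' (show f = f' by have := congrArg (Prod.snd ∘ Subtype.val) h; simpa [hb, hc] using this)
  have hbd : b ≠ d := fun h => hff' (show f = f' by have := congrArg (Prod.snd ∘ Subtype.val) h; simpa [hb, hd] using this)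
  have hcd : c ≠ d := fun h => huv (show v = u by have := congrArg (Prod.fst ∘ Subtype.val) h; simpa [hc, hd] using this).symm
  refine ⟨⟨hab, hac, had, hbc, hbd, hcd⟩, ?_, ?_, ?_, ?_⟩
  · exact ⟨hab, Or.inl (Or.inl ⟨by simp [ha, hb], by simp [ha, hb, huv], by simpa [ha, hb] using hef⟩)⟩
  · exact ⟨hbc, Or.inl (Or.inr ⟨by simp [hb, hc], by simp [hb, hc, hff'], s(u, v),
      by simpa [hb] using hef, by simpa [hc] using hef', by simp [hb]⟩)⟩
  · exact ⟨hcd, Or.inl (Or.inl ⟨by simp [hc, hd], by simp [hc, hd, huv.symm],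
      by simpa [hc, hd, Sym2.eq_swap] using hef'⟩)⟩
  · exact ⟨had.symm, Or.inl (Or.inr ⟨by simp [ha, hd], by simp [ha, hd, hff'.symm], s(u, v),
      by simpa [hd] using hef', by simpa [ha] using hef, by simp [hd]⟩)⟩
end
end

section
/- Let V be a finite vertex type and F a finite face type, with each face f assigned an edge set E_f such that every vertex incident to an edge of E_f is incident to exactly two edges of E_f, and assume the two-face condition and the single-shared-edge condition. For a vertex v, define the link graph L_v as the simple graph on the faces f with (v,f) a flag, in which f and f' are adjacent whenever f ≠ f' and some edge e ∈ E_f ∩ E_{f'} contains v. Then L_v is 2-regular: every face containing v has exactly two neighbors in L_v. -/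
open scoped Classical

noncomputable section

/-- The link graph `L_v`: the simple graph on the faces containing `v`, where `f` and `f'`
are adjacent whenever `f ≠ f'` and some edge `e ∈ E f ∩ E f'` contains `v`. -/
def linkGraph {V F : Type*} (E : F → Finset (Sym2 V)) (v : V) :
    SimpleGraph {f : F // ∃ e ∈ E f, v ∈ e} :=
  SimpleGraph.fromRel (fun f f' => ∃ e, e ∈ E f.val ∧ e ∈ E f'.val ∧ v ∈ e)

/-- Under the two-face and single-shared-edge conditions, the link graph of every vertex is
2-regular. -/
theorem link_graph_two_regular {V F : Type*} [Fintype V] [Fintype F]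
    (E : F → Finset (Sym2 V))
    (hnd : ∀ f, ∀ e ∈ E f, ¬ e.IsDiag)
    (hloc : ∀ f v, (∃ e ∈ E f, v ∈ e) → ((E f).filter (fun e => v ∈ e)).card = 2)
    (htwo : ∀ e : Sym2 V, (∃ f, e ∈ E f) →
      (Finset.univ.filter (fun f => e ∈ E f)).card = 2)
    (hshare : ∀ f f' : F, f ≠ f' → ((E f) ∩ (E f')).card ≤ 1) :
    ∀ (v : V) (f : {f : F // ∃ e ∈ E f, v ∈ e}), (linkGraph E v).degree f = 2 := by
  intro v f
  -- the two edges of f at v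
  have hS : ((E f.val).filter (fun e => v ∈ e)).card = 2 := hloc f.val v f.property
  obtain ⟨e1, e2, he12, hSeq⟩ := Finset.card_eq_two.mp hS
  have he1 : e1 ∈ (E f.val).filter (fun e => v ∈ e) := by rw [hSeq]; simp
  have he2 : e2 ∈ (E f.val).filter (fun e => v ∈ e) := by rw [hSeq]; simp
  rw [Finset.mem_filter] at he1 he2
  -- for each such edge, the unique other face
  have other : ∀ e, e ∈ E f.val → v ∈ e →
      ∃ g : F, g ≠ f.val ∧ e ∈ E g ∧
        ∀ g' : F, g' ≠ f.val → e ∈ E g' → g' = g := by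
    intro e heE hev
    have hT : (Finset.univ.filter (fun g => e ∈ E g)).card = 2 :=
      htwo e ⟨f.val, heE⟩
    have hfT : f.val ∈ Finset.univ.filter (fun g => e ∈ E g) := by
      simp [heE]
    have hcard1 : ((Finset.univ.filter (fun g => e ∈ E g)).erase f.val).card = 1 := by
      rw [Finset.card_erase_of_mem hfT, hT]
    obtain ⟨g, hg⟩ := Finset.card_eq_one.mp hcard1
    have hgmem : g ∈ (Finset.univ.filter (fun g => e ∈ E g)).erase f.val := by
      rw [hg]; simp
    rw [Finset.mem_erase, Finset.mem_filter] at hgmem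
    refine ⟨g, hgmem.1, hgmem.2.2, ?_⟩
    intro g' hg' hg'E
    have : g' ∈ (Finset.univ.filter (fun g => e ∈ E g)).erase f.val := by
      rw [Finset.mem_erase, Finset.mem_filter]; exact ⟨hg', by simp, hg'E⟩
    rw [hg] at this; simpa using this
  obtain ⟨g1, hg1ne, hg1E, hg1uniq⟩ := other e1 he1.1 he1.2
  obtain ⟨g2, hg2ne, hg2E, hg2uniq⟩ := other e2 he2.1 he2.2
  -- g1 ≠ g2 by the single-shared-edge condition
  have hgne : g1 ≠ g2 := by
    intro h
    subst h
    have hsub : ({e1, e2} : Finset (Sym2 V)) ⊆ E f.val ∩ E g1 := by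
      intro e he
      rcases Finset.mem_insert.mp he with h | h
      · subst h; exact Finset.mem_inter.mpr ⟨he1.1, hg1E⟩
      · rw [Finset.mem_singleton] at h; subst h
        exact Finset.mem_inter.mpr ⟨he2.1, hg2E⟩
    have h2 : ({e1, e2} : Finset (Sym2 V)).card = 2 := Finset.card_pair he12
    have := Finset.card_le_card hsub
    have := hshare f.val g1 (Ne.symm hg1ne)
    omega
  -- package the two neighbors as subtype elements
  have hg1p : ∃ e ∈ E g1, v ∈ e := ⟨e1, hg1E, he1.2⟩
  have hg2p : ∃ e ∈ E g2, v ∈ e := ⟨e2, hg2E, he2.2⟩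
  set G1 : {f : F // ∃ e ∈ E f, v ∈ e} := ⟨g1, hg1p⟩
  set G2 : {f : F // ∃ e ∈ E f, v ∈ e} := ⟨g2, hg2p⟩
  have hGne : G1 ≠ G2 := fun h => hgne (congrArg Subtype.val h)
  have hnbhd : (linkGraph E v).neighborFinset f = {G1, G2} := by
    ext g
    rw [SimpleGraph.mem_neighborFinset]
    constructor
    · intro hadj
      rw [linkGraph, SimpleGraph.fromRel_adj] at hadj
      obtain ⟨hne, hrel⟩ := hadj
      have : ∃ e, e ∈ E f.val ∧ e ∈ E g.val ∧ v ∈ e := by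
        rcases hrel with ⟨e, h1, h2, h3⟩ | ⟨e, h1, h2, h3⟩
        exacts [⟨e, h1, h2, h3⟩, ⟨e, h2, h1, h3⟩]
      obtain ⟨e, hef, heg, hev⟩ := this
      have heS : e ∈ (E f.val).filter (fun e => v ∈ e) :=
        Finset.mem_filter.mpr ⟨hef, hev⟩
      rw [hSeq] at heS
      have hgvne : g.val ≠ f.val := fun h => hne (Subtype.ext h).symm
      rcases Finset.mem_insert.mp heS with h | h
      · subst h
        exact Finset.mem_insert.mpr (Or.inl (Subtype.ext (hg1uniq g.val hgvne heg)))
      · rw [Finset.mem_singleton] at h; subst h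
        exact Finset.mem_insert.mpr (Or.inr (Finset.mem_singleton.mpr (Subtype.ext (hg2uniq g.val hgvne heg))))
    · intro hg
      rw [linkGraph, SimpleGraph.fromRel_adj]
      rcases Finset.mem_insert.mp hg with h | h
      · subst h
        exact ⟨fun h => hg1ne (congrArg Subtype.val h).symm,
          Or.inl ⟨e1, he1.1, hg1E, he1.2⟩⟩
      · rw [Finset.mem_singleton] at h
        subst h
        exact ⟨fun h => hg2ne (congrArg Subtype.val h).symm,
          Or.inl ⟨e2, he2.1, hg2E, he2.2⟩⟩
  rw [SimpleGraph.degree, hnbhd, Finset.card_pair hGne]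
end
end
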